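/- For all positive integers ℓ and q there exists κ₀ > 0 such that χ₁(κ; ℓ, q) < 0 for every κ ∈ (0, κ₀). -/

import Mathlib

open MeasureTheory Real Set Filter
open scoped ENNReal

noncomputable section

/-- The quantity `χ₁(κ; ℓ, q)`. -/
def chi1 (κ : ℝ) (l q : ℕ) : ℝ :=
  if l = q then
    κ + Real.sin (4 * π * q * κ) / (4 * π * q) - Real.sin (2 * π * q * κ) / (π * q)
  else
    Real.sin (2 * π * ((l:ℝ) - q) * κ) / (2 * π * ((l:ℝ) - q))
      + Real.sin (2 * π * ((l:ℝ) + q) * κ) / (2 * π * ((l:ℝ) + q))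
      - Real.sin (2 * π * q * κ) / (π * q)

/-!
Writing `sin (t κ) / t = κ · sinc (t κ)` (and `κ = κ · sinc 0` on the diagonal), with
`x = 2πℓκ` and `y = 2πqκ` both cases become
`χ₁ = κ · (sinc (x - y) + sinc (x + y) - 2 sinc y)`.
Since `sinc z = 1 - z²/6 + O(z⁴)`, the bracket is `-x²/3 + O((x + y)⁴)`, which is negative
as soon as `(x + y)² < x`, i.e. for `κ < ℓ / (2π (ℓ + q)²)`.
-/

namespace Real

theorem abs_sinc_sub_le {x : ℝ} (hx : |x| ≤ 1) :
    |sinc x - (1 - x ^ 2 / 6)| ≤ |x| ^ 4 / 100 := by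
  rcases eq_or_ne x 0 with rfl | hx0
  · simp
  have hx' : 0 < |x| := abs_pos.mpr hx0
  have heq : sinc x - (1 - x ^ 2 / 6) = (sin x - (x - x ^ 3 / 6)) / x := by
    rw [sinc_of_ne_zero hx0]
    field_simp
  rw [heq, abs_div, div_le_iff₀ hx']
  calc |sin x - (x - x ^ 3 / 6)| ≤ |x| ^ 5 / 100 := sin_bound hx
    _ = |x| ^ 4 / 100 * |x| := by ring

theorem sin_mul_div_eq_mul_sinc {t : ℝ} (ht : t ≠ 0) (κ : ℝ) :
    sin (t * κ) / t = κ * sinc (t * κ) := by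
  rcases eq_or_ne κ 0 with rfl | hκ
  · simp
  rw [sinc_of_ne_zero (mul_ne_zero ht hκ)]
  field_simp

theorem sinc_sub_add_sinc_add_sub_two_sinc_le {x y : ℝ} (hx : 0 ≤ x) (hy : 0 ≤ y)
    (hxy : x + y ≤ 1) :
    sinc (x - y) + sinc (x + y) - 2 * sinc y ≤ -x ^ 2 / 3 + (x + y) ^ 4 / 25 := by
  have hsub : |x - y| ≤ x + y := abs_le.mpr ⟨by linarith, by linarith⟩
  have hsum : |x + y| = x + y := abs_of_nonneg (by linarith)
  have hyabs : |y| = y := abs_of_nonneg hy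
  have h₁ := abs_le.mp (abs_sinc_sub_le (hsub.trans hxy))
  have h₂ := abs_le.mp (abs_sinc_sub_le (hsum.le.trans hxy))
  have h₃ := abs_le.mp (abs_sinc_sub_le (hyabs.le.trans (by linarith)))
  rw [hsum] at h₂
  rw [hyabs] at h₃
  have hsub4 : |x - y| ^ 4 ≤ (x + y) ^ 4 := pow_le_pow_left₀ (abs_nonneg _) hsub 4
  have hy4 : y ^ 4 ≤ (x + y) ^ 4 := pow_le_pow_left₀ hy (by linarith) 4
  linarith [h₁.2, h₂.2, h₃.1]

theorem sinc_sub_add_sinc_add_sub_two_sinc_neg {x y : ℝ} (hx : 0 < x) (hy : 0 ≤ y)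
    (hxy : (x + y) ^ 2 < x) :
    sinc (x - y) + sinc (x + y) - 2 * sinc y < 0 := by
  have hlt : x + y < 1 := by nlinarith
  have h4 : (x + y) ^ 4 < x ^ 2 := by
    rw [show (x + y) ^ 4 = ((x + y) ^ 2) ^ 2 by ring]
    exact pow_lt_pow_left₀ hxy (by positivity) two_ne_zero
  linarith [sinc_sub_add_sinc_add_sub_two_sinc_le hx.le hy hlt.le, pow_pos hx 2]

end Real

theorem chi1_eq_mul_sinc (κ : ℝ) (l : ℕ) {q : ℕ} (hq : q ≠ 0) :
    chi1 κ l q = κ * (sinc (2 * π * l * κ - 2 * π * q * κ) + sinc (2 * π * l * κ + 2 * π * q * κ)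
      - 2 * sinc (2 * π * q * κ)) := by
  have hq' : (q : ℝ) ≠ 0 := Nat.cast_ne_zero.mpr hq
  have hy : sin (2 * π * q * κ) / (π * q) = 2 * (κ * sinc (2 * π * q * κ)) := by
    rw [← sin_mul_div_eq_mul_sinc (by positivity)]
    field_simp
  rw [chi1]
  split_ifs with hlq
  · subst hlq
    rw [sub_self, sinc_zero, hy, show 2 * π * l * κ + 2 * π * l * κ = 4 * π * l * κ by ring,
      sin_mul_div_eq_mul_sinc (by positivity)]
    ring
  · have hlq' : (l : ℝ) - q ≠ 0 := sub_ne_zero.mpr (by exact_mod_cast hlq)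
    have hlq'' : (l : ℝ) + q ≠ 0 := by positivity
    rw [hy, sin_mul_div_eq_mul_sinc (by positivity), sin_mul_div_eq_mul_sinc (by positivity),
      show 2 * π * l * κ - 2 * π * q * κ = 2 * π * (l - q) * κ by ring,
      show 2 * π * l * κ + 2 * π * q * κ = 2 * π * (l + q) * κ by ring]
    ring

/-- `χ₁(κ; ℓ, q) < 0` for all sufficiently small `κ > 0`. -/
theorem stmt15 (l q : ℕ) (hl : 0 < l) (hq : 0 < q) :
    ∃ κ₀ > (0:ℝ), ∀ κ : ℝ, 0 < κ → κ < κ₀ → chi1 κ l q < 0 := by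
  refine ⟨l / (2 * π * ((l : ℝ) + q) ^ 2), by positivity, fun κ hκ hκ₀ => ?_⟩
  rw [chi1_eq_mul_sinc κ l hq.ne']
  refine mul_neg_of_pos_of_neg hκ (sinc_sub_add_sinc_add_sub_two_sinc_neg (by positivity)
    (by positivity) ?_)
  rw [lt_div_iff₀ (by positivity)] at hκ₀
  calc (2 * π * l * κ + 2 * π * q * κ) ^ 2 = 2 * π * κ * (κ * (2 * π * ((l : ℝ) + q) ^ 2)) := by
        ring
    _ < 2 * π * κ * l := by gcongr
    _ = 2 * π * l * κ := by ring
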